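/- arXiv:1002.3844 — 5 statements merged into one kernel-verified Lean document; each statement's English description precedes it below -/
import Mathlib

section
/- For every integer k ≥ 1 and every integer n ≥ 1: if k is even then 2·S_k(n) = (2n+1)^k − (2n−1)^k, and if k is odd then 2·S_k(n) = (2n+1)^k − (2n−1)^k + 2·(−1)^n. -/
/-!
Count with the sign `(-1)^(p₁+⋯+pₖ)`: twice the number of even-sum points of the box
`[-n, n]^k` is `(2n+1)^k` plus their signed count, and the signed count factorises over the
coordinates as `(∑_{|x| ≤ n} (-1)^x)^k = ((-1)^n)^k`. `S_k(n)` is the difference of the even-sum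
counts for the boxes of radius `n` and `n - 1`.
-/

/-- `S k n` : the number of vectors `p ∈ ℤ^k` with `max_i |p i| = n`
(i.e. `|p i| ≤ n` for all `i` and `|p i| = n` for some `i`)
and even coordinate sum. -/
noncomputable def S (k n : ℕ) : ℕ :=
  Nat.card {p : Fin k → ℤ //
    (∀ i, |p i| ≤ (n : ℤ)) ∧ (∃ i, |p i| = (n : ℤ)) ∧ Even (∑ i, p i)}

open Finset

lemma Int.negOnePow_sum {ι : Type*} (s : Finset ι) (f : ι → ℤ) :
    (∑ i ∈ s, f i).negOnePow = ∏ i ∈ s, (f i).negOnePow := by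
  induction s using Finset.cons_induction with
  | empty => simp
  | cons a s ha ih => rw [sum_cons, prod_cons, Int.negOnePow_add, ih]

lemma two_mul_card_filter_even {α : Type*} (s : Finset α) (f : α → ℤ) :
    2 * (#(s.filter fun x => Even (f x)) : ℤ) = #s + ∑ x ∈ s, ((f x).negOnePow : ℤ) := by
  have hsign (x : α) : ((f x).negOnePow : ℤ) = if Even (f x) then 1 else -1 := by
    split_ifs with h
    · rw [Int.negOnePow_even _ h, Units.val_one]
    · rw [Int.negOnePow_odd _ (Int.not_even_iff_odd.1 h), Units.val_neg, Units.val_one]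
  simp_rw [hsign, sum_ite, sum_const,
    ← card_filter_add_card_filter_not (s := s) (fun x => Even (f x))]
  push_cast
  ring

lemma sum_piFinset_negOnePow_sum {ι : Type*} [Fintype ι] [DecidableEq ι] (s : Finset ℤ) :
    ∑ p ∈ Fintype.piFinset (fun _ : ι => s), ((∑ i, p i).negOnePow : ℤ) =
      (∑ x ∈ s, (x.negOnePow : ℤ)) ^ Fintype.card ι := by
  simp_rw [Int.negOnePow_sum, Units.coe_prod]
  exact (prod_univ_sum (fun _ => s) fun _ x => (x.negOnePow : ℤ)).symm.trans
    (by rw [prod_const, card_univ])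

lemma sum_Icc_neg_negOnePow (n : ℕ) :
    ∑ x ∈ Icc (-(n : ℤ)) n, (x.negOnePow : ℤ) = (-1) ^ n := by
  induction n with
  | zero => simp
  | succ n ih =>
    have hIcc : Icc (-((n + 1 : ℕ) : ℤ)) (n + 1 : ℕ) =
        cons (-(n + 1 : ℤ)) (cons (n + 1 : ℤ) (Icc (-(n : ℤ)) n) (by simp))
          (by simp only [mem_cons, mem_Icc]; omega) := by
      ext x
      simp only [mem_cons, mem_Icc]
      omega
    rw [hIcc, sum_cons, sum_cons, ih, Int.negOnePow_neg, Int.negOnePow_succ, Units.val_neg,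
      Int.coe_negOnePow_natCast]
    ring

noncomputable def evenSumBox (k n : ℕ) : Finset (Fin k → ℤ) :=
  (Fintype.piFinset fun _ => Icc (-(n : ℤ)) n).filter fun p => Even (∑ i, p i)

lemma two_mul_card_evenSumBox (k n : ℕ) :
    2 * (#(evenSumBox k n) : ℤ) = (2 * n + 1) ^ k + ((-1) ^ n) ^ k := by
  have hIcc : #(Icc (-(n : ℤ)) n) = 2 * n + 1 := by
    rw [Int.card_Icc]
    omega
  rw [evenSumBox, two_mul_card_filter_even, sum_piFinset_negOnePow_sum, sum_Icc_neg_negOnePow,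
    Fintype.card_piFinset, prod_const, hIcc, Fintype.card_fin, card_univ, Fintype.card_fin]
  push_cast
  ring

lemma mem_evenSumBox {k n : ℕ} {p : Fin k → ℤ} :
    p ∈ evenSumBox k n ↔ (∀ i, |p i| ≤ n) ∧ Even (∑ i, p i) := by
  simp only [evenSumBox, mem_filter, Fintype.mem_piFinset, mem_Icc, abs_le]

lemma evenSumBox_mono (k : ℕ) : Monotone (evenSumBox k) := fun m n hmn =>
  filter_subset_filter _ <| Fintype.piFinset_subset _ _ fun _ =>
    Icc_subset_Icc (by omega) (by omega)

lemma S_succ_eq_card_sdiff (k n : ℕ) :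
    S k (n + 1) = #(evenSumBox k (n + 1) \ evenSumBox k n) := by
  rw [S, ← Fintype.card_coe, ← Nat.card_eq_fintype_card]
  refine Nat.card_congr (Equiv.subtypeEquivRight fun p => ?_)
  simp only [mem_sdiff, mem_evenSumBox, Nat.cast_add_one]
  constructor
  · rintro ⟨hle, ⟨i, hi⟩, heven⟩
    exact ⟨⟨hle, heven⟩, fun h => by have := h.1 i; omega⟩
  · rintro ⟨⟨hle, heven⟩, hout⟩
    obtain ⟨i, hi⟩ := not_forall.1 fun h => hout ⟨h, heven⟩
    exact ⟨hle, ⟨i, by have := hle i; omega⟩, heven⟩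

theorem S_formula_general (k n : ℕ) (hn : 1 ≤ n) :
    (Even k → 2 * (S k n : ℤ) = (2 * (n : ℤ) + 1) ^ k - (2 * (n : ℤ) - 1) ^ k) ∧
    (Odd k → 2 * (S k n : ℤ) =
      (2 * (n : ℤ) + 1) ^ k - (2 * (n : ℤ) - 1) ^ k + 2 * (-1) ^ n) := by
  obtain ⟨m, rfl⟩ := Nat.exists_eq_add_of_le' hn
  have h : 2 * (S k (m + 1) : ℤ) = (2 * (m + 1 : ℕ) + 1) ^ k - (2 * m + 1) ^ k +
      ((-1) ^ (m + 1)) ^ k - ((-1) ^ m) ^ k := by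
    rw [S_succ_eq_card_sdiff, card_sdiff_of_subset (evenSumBox_mono k (Nat.le_add_right m 1)),
      Nat.cast_sub (card_le_card (evenSumBox_mono k (Nat.le_add_right m 1))), mul_sub,
      two_mul_card_evenSumBox, two_mul_card_evenSumBox]
    push_cast
    ring
  refine ⟨fun hk => ?_, fun hk => ?_⟩ <;>
    rw [h, pow_right_comm _ _ k, pow_right_comm _ m k, hk.neg_one_pow] <;> push_cast <;> ring

theorem S_formula (k n : ℕ) (hk : 1 ≤ k) (hn : 1 ≤ n) :
    (Even k → 2 * (S k n : ℤ) = (2 * (n : ℤ) + 1) ^ k - (2 * (n : ℤ) - 1) ^ k) ∧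
    (Odd k → 2 * (S k n : ℤ) =
      (2 * (n : ℤ) + 1) ^ k - (2 * (n : ℤ) - 1) ^ k + 2 * (-1) ^ n) :=
  S_formula_general k n hn
end

section
/- For every integer n ≥ 0, 3·A_3^b(n) = 3 + 2n(7 + 12n + 8n²); moreover, for every integer n ≥ 1, A_3^s(n) = 2 + 16n². -/
/-- `Akb k n` : the number of vectors `p ∈ ℤ^(k+1)` with `|p i| ≤ n` for all `i`
and zero coordinate sum (bulk count for the `A_k` lattice). -/
noncomputable def Akb (k n : ℕ) : ℕ :=
  Nat.card {p : Fin (k + 1) → ℤ // (∀ i, |p i| ≤ (n : ℤ)) ∧ ∑ i, p i = 0}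

/-- `Aks k n` : the number of vectors `p ∈ ℤ^(k+1)` with `max_i |p i| = n`
and zero coordinate sum (surface count for the `A_k` lattice). -/
noncomputable def Aks (k n : ℕ) : ℕ :=
  Nat.card {p : Fin (k + 1) → ℤ //
    (∀ i, |p i| ≤ (n : ℤ)) ∧ (∃ i, |p i| = (n : ℤ)) ∧ ∑ i, p i = 0}

/-!
A zero-sum vector `(a, b, c, d)` in the box `[-n, n]⁴` is a choice of `a, b` together with a
solution of `c + d = -(a + b)` in the box, and there are `2n + 1 - |a + b|` of those. Hence
`A_3^b(n) = ∑_{a,b} (2n + 1 - |a + b|)`; the double sum of `|a + b|` over the box grows by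
`8(n + 1)²` from `n` to `n + 1`, which gives the bulk formula. Vectors of sup-norm exactly `n + 1`
are those of the box of radius `n + 1` that are not in the box of radius `n`, so the surface count
is the difference of two consecutive bulk counts.
-/

open Finset Fintype

lemma card_Icc_neg_self (m : ℕ) : #(Icc (-(m : ℤ)) m) = 2 * m + 1 := by
  rw [Int.card_Icc]; omega

lemma sum_Icc_neg_succ {M : Type*} [AddCommMonoid M] (f : ℤ → M) (m : ℕ) :
    ∑ x ∈ Icc (-(m + 1 : ℤ)) (m + 1), f x =
      f (-(m + 1)) + f (m + 1) + ∑ x ∈ Icc (-(m : ℤ)) m, f x := by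
  have h_Icc : Icc (-(m + 1 : ℤ)) (m + 1) =
      insert (-(m + 1 : ℤ)) (insert (m + 1 : ℤ) (Icc (-(m : ℤ)) m)) := by
    ext x; simp only [mem_Icc, mem_insert]; omega
  rw [h_Icc, sum_insert (by simp only [mem_Icc, mem_insert]; omega),
    sum_insert (by simp only [mem_Icc]; omega), add_assoc]

lemma abs_neg_add_add_abs_add {x m : ℤ} (h : |x| ≤ m) : |-m + x| + |m + x| = 2 * m := by
  rw [abs_le] at h
  rw [abs_of_nonpos (by omega), abs_of_nonneg (by omega)]; ring

lemma sum_sum_abs_add_succ (n : ℕ) :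
    ∑ a ∈ Icc (-(n + 1 : ℤ)) (n + 1), ∑ b ∈ Icc (-(n + 1 : ℤ)) (n + 1), |a + b| =
      ∑ a ∈ Icc (-(n : ℤ)) n, ∑ b ∈ Icc (-(n : ℤ)) n, |a + b| + 8 * (n + 1) ^ 2 := by
  have h_edge : ∀ x ∈ Icc (-(n + 1 : ℤ)) (n + 1),
      |-(n + 1 : ℤ) + x| + |(n + 1 : ℤ) + x| = 2 * (n + 1) :=
    fun x hx => abs_neg_add_add_abs_add (abs_le.2 (mem_Icc.1 hx))
  have h_inner : ∀ a ∈ Icc (-(n : ℤ)) n, ∑ b ∈ Icc (-(n + 1 : ℤ)) (n + 1), |a + b| =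
      2 * (n + 1) + ∑ b ∈ Icc (-(n : ℤ)) n, |a + b| := fun a ha => by
    rw [sum_Icc_neg_succ, add_comm a, add_comm a,
      h_edge a (Icc_subset_Icc (by omega) (by omega) ha)]
  rw [sum_Icc_neg_succ, ← sum_add_distrib, sum_congr rfl h_edge, sum_congr rfl h_inner,
    sum_add_distrib, sum_const, sum_const, ← Nat.cast_one, ← Nat.cast_add, card_Icc_neg_self,
    card_Icc_neg_self]
  push_cast; ring

lemma three_mul_sum_sum_abs_add (n : ℕ) :
    3 * ∑ a ∈ Icc (-(n : ℤ)) n, ∑ b ∈ Icc (-(n : ℤ)) n, |a + b| =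
      4 * n * (n + 1) * (2 * n + 1) := by
  induction n with
  | zero => simp
  | succ n ih => push_cast; rw [sum_sum_abs_add_succ, mul_add, ih]; ring

noncomputable def boxSumCount (k n : ℕ) (s : ℤ) : ℕ :=
  #{q ∈ piFinset fun _ : Fin k => Icc (-(n : ℤ)) n | ∑ i, q i = s}

lemma boxSumCount_zero (n : ℕ) (s : ℤ) : boxSumCount 0 n s = if s = 0 then 1 else 0 := by
  unfold boxSumCount
  split_ifs with h <;> simp [h, eq_comm]

lemma boxSumCount_succ (k n : ℕ) (s : ℤ) :
    boxSumCount (k + 1) n s = ∑ c ∈ Icc (-(n : ℤ)) n, boxSumCount k n (s - c) := by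
  rw [boxSumCount, card_eq_sum_card_fiberwise (f := fun q => q 0) (t := Icc (-(n : ℤ)) n)]
  · refine sum_congr rfl fun c hc => ?_
    refine card_nbij' Fin.tail (fun q => Fin.cons c q) ?_ ?_ ?_ ?_ <;>
      simp only [coe_filter, mem_filter, mem_piFinset]
    · rintro q ⟨⟨hbox, hsum⟩, rfl⟩
      rw [Fin.sum_univ_succ] at hsum
      exact ⟨fun i => hbox i.succ, by rw [← hsum]; simp [Fin.tail]⟩
    · rintro q ⟨hbox, hsum⟩
      refine ⟨⟨Fin.forall_fin_succ.2 ⟨hc, hbox⟩, ?_⟩, rfl⟩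
      simp [Fin.sum_univ_succ, hsum]
    · rintro q ⟨-, rfl⟩
      exact Fin.cons_self_tail q
    · intro q _
      exact Fin.tail_cons _ _
  · intro q hq
    simp only [coe_filter, Set.mem_ofPred_eq, mem_piFinset] at hq
    exact hq.1 0

lemma boxSumCount_one (n : ℕ) (s : ℤ) :
    boxSumCount 1 n s = if s ∈ Icc (-(n : ℤ)) n then 1 else 0 := by
  simp [boxSumCount_succ, boxSumCount_zero, sub_eq_zero]

lemma boxSumCount_two (n : ℕ) {s : ℤ} (hs : |s| ≤ 2 * n) :
    (boxSumCount 2 n s : ℤ) = 2 * n + 1 - |s| := by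
  have h_filter : {c ∈ Icc (-(n : ℤ)) n | s - c ∈ Icc (-(n : ℤ)) n} =
      Icc (max (-(n : ℤ)) (s - n)) (min (n : ℤ) (s + n)) := by
    ext c; simp only [mem_filter, mem_Icc, le_min_iff, max_le_iff]; omega
  rw [boxSumCount_succ]
  simp_rw [boxSumCount_one]
  rw [sum_boole, Nat.cast_id, h_filter, Int.card_Icc]
  rw [abs_le] at hs
  rcases le_total 0 s with h | h
  · rw [abs_of_nonneg h, max_eq_right (by omega), min_eq_left (by omega)]; omega
  · rw [abs_of_nonpos h, max_eq_left (by omega), min_eq_right (by omega)]; omega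

lemma Akb_eq_boxSumCount (k n : ℕ) : Akb k n = boxSumCount (k + 1) n 0 :=
  Nat.subtype_card _ fun p => by simp [abs_le]

lemma Akb_succ_eq_add_Aks (k n : ℕ) : Akb k (n + 1) = Akb k n + Aks k (n + 1) := by
  set F := {p ∈ piFinset fun _ : Fin (k + 1) => Icc (-(n + 1 : ℤ)) (n + 1) | ∑ i, p i = 0}
  have h_box : ∀ p : Fin (k + 1) → ℤ, p ∈ F ↔ (∀ i, |p i| ≤ n + 1) ∧ ∑ i, p i = 0 := by
    simp [F, abs_le]
  have h_all : Akb k (n + 1) = #F := Nat.subtype_card _ fun p => by rw [h_box]; push_cast; rfl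
  have h_bulk : Akb k n = #{p ∈ F | ¬∃ i, |p i| = (n + 1 : ℤ)} := Nat.subtype_card _ fun p => by
    rw [mem_filter, h_box, not_exists, and_right_comm, ← forall_and]
    refine and_congr (forall_congr' fun i => ?_) Iff.rfl
    omega
  have h_surf : Aks k (n + 1) = #{p ∈ F | ∃ i, |p i| = (n + 1 : ℤ)} :=
    Nat.subtype_card _ fun p => by
      rw [mem_filter, h_box, and_right_comm, and_assoc]
      push_cast; rfl
  rw [h_all, h_bulk, h_surf]
  exact ((add_comm _ _).trans (card_filter_add_card_filter_not _)).symm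

lemma Akb_three_eq_sum_sum (n : ℕ) :
    (Akb 3 n : ℤ) = ∑ a ∈ Icc (-(n : ℤ)) n, ∑ b ∈ Icc (-(n : ℤ)) n, (2 * n + 1 - |a + b|) := by
  rw [Akb_eq_boxSumCount, boxSumCount_succ, Nat.cast_sum]
  refine sum_congr rfl fun a ha => ?_
  rw [boxSumCount_succ, Nat.cast_sum]
  refine sum_congr rfl fun b hb => ?_
  rw [mem_Icc] at ha hb
  rw [boxSumCount_two n (abs_le.2 ⟨by omega, by omega⟩), zero_sub, ← neg_add', abs_neg]

lemma three_mul_Akb_three (n : ℕ) : 3 * Akb 3 n = 3 + 2 * n * (7 + 12 * n + 8 * n ^ 2) := by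
  have h_abs := three_mul_sum_sum_abs_add n
  have h_count := Akb_three_eq_sum_sum n
  simp only [sum_sub_distrib, sum_const, card_Icc_neg_self, nsmul_eq_mul] at h_count
  push_cast at h_count
  zify
  linear_combination 3 * h_count - h_abs

lemma Aks_three_succ (n : ℕ) : Aks 3 (n + 1) = 2 + 16 * (n + 1) ^ 2 := by
  have h_shell := Akb_succ_eq_add_Aks 3 n
  have h_bulk := three_mul_Akb_three n
  have h_bulk_succ := three_mul_Akb_three (n + 1)
  refine Nat.eq_of_mul_eq_mul_left (by norm_num : 0 < 3) ?_
  zify at *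
  linear_combination h_bulk_succ - h_bulk - 3 * h_shell

theorem A3_bulk_surface :
    (∀ n : ℕ, 3 * Akb 3 n = 3 + 2 * n * (7 + 12 * n + 8 * n ^ 2)) ∧
    (∀ n : ℕ, 1 ≤ n → Aks 3 n = 2 + 16 * n ^ 2) := by
  refine ⟨three_mul_Akb_three, fun n hn => ?_⟩
  obtain ⟨m, rfl⟩ := Nat.exists_eq_add_of_le' hn
  exact Aks_three_succ m
end

section
/- For every integer k ≥ 1 and every integer n ≥ k+1, A_k^b(n) = ∑_{j=1}^{k+1} (−1)^{j+1} · C(k+1, j) · A_k^b(n−j). -/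
open Polynomial Finset fwdDiff

theorem Polynomial.sum_range_choose_mul_eval_sub_eq_zero {R : Type*} [CommRing R] {P : R[X]}
    {d n : ℕ} (hP : P.natDegree ≤ d) (hn : d + 1 ≤ n) :
    ∑ j ∈ range (d + 2), (-1) ^ j * ((d + 1).choose j : R) * P.eval ((n - j : ℕ) : R) = 0 := by
  have h := congr_fun (fwdDiff_iter_eq_zero_of_degree_lt (Nat.lt_succ_of_le hP))
    ((n - (d + 1) : ℕ) : R)
  rw [fwdDiff_iter_eq_sum_shift, ← sum_range_reflect, Pi.zero_apply] at h
  rw [← h]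
  refine sum_congr rfl fun j hj ↦ ?_
  have hj : j ≤ d + 1 := Nat.le_of_lt_succ (mem_range.1 hj)
  rw [show d.succ + 1 - 1 - j = d + 1 - j by omega, Nat.choose_symm hj, zsmul_eq_mul, nsmul_one,
    ← Nat.cast_add, show n - (d + 1) + (d + 1 - j) = n - j by omega, Nat.sub_sub_self hj]
  push_cast
  ring

theorem Polynomial.coeff_sum_X_pow_pow {R : Type*} [CommSemiring R] (s : Finset ℕ) (r N : ℕ) :
    ((∑ t ∈ s, X ^ t : R[X]) ^ r).coeff N =
      #{g ∈ Fintype.piFinset fun _ : Fin r ↦ s | ∑ i, g i = N} := by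
  rw [← Fin.prod_const, prod_univ_sum, finsetSum_coeff, card_filter, Nat.cast_sum]
  simp [prod_pow_eq_pow_sum, coeff_X_pow, eq_comm]

theorem Polynomial.coeff_geom_sum_pow {R : Type*} [CommRing R] (L d N : ℕ) :
    ((∑ t ∈ range L, X ^ t : R[X]) ^ (d + 1)).coeff N =
      ∑ i ∈ range (d + 2), (-1) ^ i * ((d + 1).choose i : R) *
        if i * L ≤ N then ((d + (N - i * L)).choose d : R) else 0 := by
  set S : PowerSeries R := .mk fun n ↦ ((d + n).choose d : R)
  have hS : S * (1 - PowerSeries.X) ^ (d + 1) = 1 :=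
    PowerSeries.mk_add_choose_mul_one_sub_pow_eq_one R d
  have hgeom : ((∑ t ∈ range L, X ^ t : R[X]) : PowerSeries R) * (1 - PowerSeries.X) =
      1 - PowerSeries.X ^ L := by
    simpa using congrArg (fun p : R[X] ↦ (p : PowerSeries R)) (geom_sum_mul_neg (X : R[X]) L)
  have hpow : (((∑ t ∈ range L, X ^ t : R[X]) ^ (d + 1) : R[X]) : PowerSeries R) =
      (∑ i ∈ range (d + 2), PowerSeries.C ((-1) ^ i * ((d + 1).choose i : R)) *
        PowerSeries.X ^ (i * L)) * S := by
    calc _ = (((∑ t ∈ range L, X ^ t : R[X]) : PowerSeries R) * (1 - PowerSeries.X)) ^ (d + 1)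
            * S := by
          rw [Polynomial.coe_pow, mul_pow, mul_assoc, mul_comm _ S, hS, mul_one]
      _ = _ := by
          rw [hgeom, sub_eq_neg_add, add_pow]
          congr 1
          refine sum_congr rfl fun i _ ↦ ?_
          rw [neg_pow, one_pow, mul_one, ← pow_mul, map_mul, map_pow, map_neg, map_one,
            map_natCast]
          ring
  rw [← coeff_coe, hpow, sum_mul, map_sum]
  refine sum_congr rfl fun i _ ↦ ?_
  rw [mul_assoc, PowerSeries.coeff_C_mul, PowerSeries.coeff_X_pow_mul']
  split_ifs <;> simp [S]

theorem Akb_eq_card (k m : ℕ) :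
    Akb k m = #{g ∈ Fintype.piFinset fun _ : Fin (k + 1) ↦ range (2 * m + 1) |
      ∑ i, g i = (k + 1) * m} := by
  rw [Akb, ← Nat.card_eq_finsetCard]
  refine Nat.card_congr
    { toFun p := ⟨fun i ↦ (p.1 i + m).toNat, ?_⟩
      invFun g := ⟨fun i ↦ g.1 i - m, ?_⟩
      left_inv p := ?_
      right_inv g := ?_ }
  · obtain ⟨p, hp, hsum⟩ := p
    have hp' : ∀ i, -(m : ℤ) ≤ p i ∧ p i ≤ m := fun i ↦ abs_le.1 (hp i)
    simp only [mem_filter, Fintype.mem_piFinset, mem_range]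
    refine ⟨fun i ↦ by have := hp' i; omega, ?_⟩
    zify
    rw [sum_congr rfl fun i _ ↦ Int.toNat_of_nonneg (by have := hp' i; omega), sum_add_distrib,
      hsum]
    simp
  · obtain ⟨g, hg⟩ := g
    simp only [mem_filter, Fintype.mem_piFinset, mem_range] at hg ⊢
    refine ⟨fun i ↦ abs_le.2 (by have := hg.1 i; constructor <;> omega), ?_⟩
    rw [sum_sub_distrib]
    simp only [← Nat.cast_sum, hg.2]
    simp
  · ext i
    have := (abs_le.1 (p.2.1 i)).1
    dsimp only
    omega
  · ext i
    simp

theorem choose_add_sub_mul_eq_ite (k m i : ℕ) :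
    (if i * (2 * m + 1) ≤ (k + 1) * m then (k + ((k + 1) * m - i * (2 * m + 1))).choose k
      else 0) =
      if 2 * i ≤ k then ((k + 1 - 2 * i) * m + (k - i)).choose k else 0 := by
  split_ifs with hle hi hi
  · obtain ⟨c, rfl⟩ := Nat.exists_eq_add_of_le hi
    rw [show 2 * i + c + 1 - 2 * i = c + 1 by omega]
    congr 1
    ring_nf at hle ⊢
    omega
  · nlinarith
  · -- the truncation only bites when `(k + 1 - 2i) m < i`, and then the top index is below `k`
    obtain ⟨c, rfl⟩ := Nat.exists_eq_add_of_le hi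
    rw [show 2 * i + c + 1 - 2 * i = c + 1 by omega]
    refine (Nat.choose_eq_zero_of_lt ?_).symm
    ring_nf at hle ⊢
    omega
  · rfl

noncomputable def akbPoly (k : ℕ) : ℚ[X] :=
  ∑ i ∈ range (k + 2), if 2 * i ≤ k then
    C ((-1) ^ i * ((k + 1).choose i : ℚ) / k.factorial) *
      (descPochhammer ℚ k).comp (C ((k + 1 - 2 * i : ℕ) : ℚ) * X + C ((k - i : ℕ) : ℚ))
    else 0

theorem Akb_eq_eval_akbPoly (k m : ℕ) : (Akb k m : ℚ) = (akbPoly k).eval (m : ℚ) := by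
  rw [Akb_eq_card, ← coeff_sum_X_pow_pow, coeff_geom_sum_pow, akbPoly, eval_finsetSum]
  refine sum_congr rfl fun i _ ↦ ?_
  have h := congrArg (Nat.cast : ℕ → ℚ) (choose_add_sub_mul_eq_ite k m i)
  simp only [Nat.cast_ite, Nat.cast_zero] at h
  rw [h]
  split_ifs
  · rw [eval_mul, eval_C, eval_comp]
    simp only [eval_add, eval_mul, eval_C, eval_X]
    rw [← Nat.cast_mul, ← Nat.cast_add, descPochhammer_eval_eq_descFactorial,
      Nat.descFactorial_eq_factorial_mul_choose]
    push_cast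
    field_simp
  · simp

theorem natDegree_akbPoly_le (k : ℕ) : (akbPoly k).natDegree ≤ k := by
  refine natDegree_sum_le_of_forall_le _ _ fun i _ ↦ ?_
  split_ifs
  · refine (natDegree_C_mul_le _ _).trans (natDegree_comp_le.trans ?_)
    rw [descPochhammer_natDegree]
    exact (Nat.mul_le_mul_left k natDegree_linear_le).trans (mul_one k).le
  · simp

theorem Akb_recurrence_general (k n : ℕ) (hn : k + 1 ≤ n) :
    (Akb k n : ℤ) = ∑ j ∈ Finset.Icc 1 (k + 1),
      (-1) ^ (j + 1) * ((k + 1).choose j : ℤ) * (Akb k (n - j) : ℤ) := by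
  have hℚ := sum_range_choose_mul_eval_sub_eq_zero (natDegree_akbPoly_le k) hn
  simp only [← Akb_eq_eval_akbPoly] at hℚ
  have h : ∑ j ∈ range (k + 2), (-1) ^ j * ((k + 1).choose j : ℤ) * (Akb k (n - j) : ℤ) = 0 := by
    exact_mod_cast hℚ
  rw [range_eq_Ico, sum_eq_sum_Ico_succ_bot (by omega), zero_add,
    show k + 2 = k + 1 + 1 from rfl, Ico_add_one_right_eq_Icc] at h
  simp only [pow_succ, mul_neg_one, neg_mul, sum_neg_distrib]
  simpa [add_eq_zero_iff_eq_neg] using h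

theorem Akb_recurrence (k n : ℕ) (hk : 1 ≤ k) (hn : k + 1 ≤ n) :
    (Akb k n : ℤ) = ∑ j ∈ Finset.Icc 1 (k + 1),
      (-1) ^ (j + 1) * ((k + 1).choose j : ℤ) * (Akb k (n - j) : ℤ) :=
  Akb_recurrence_general k n hn
end

section
/- For every integer n ≥ 0, 5·A_5^b(n) = (2n+1)(5 + 27n + 71n² + 88n³ + 44n⁴); moreover, for every integer n ≥ 1, A_5^s(n) = 2 + 50n² + 88n⁴. -/
open Finset

/-- Extending `Nat.choose` by zero to negative arguments (rather than polynomially, as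
`Ring.choose` does) keeps Pascal's rule valid for every `a : ℤ`. -/
def truncChoose (a : ℤ) (r : ℕ) : ℤ := if 0 ≤ a then (a.toNat.choose r : ℤ) else 0

@[simp]
lemma truncChoose_natCast (b r : ℕ) : truncChoose b r = b.choose r := by
  simp [truncChoose]

lemma truncChoose_of_lt {a : ℤ} {r : ℕ} (h : a < r) : truncChoose a r = 0 := by
  unfold truncChoose
  split_ifs
  · exact_mod_cast Nat.choose_eq_zero_of_lt (by omega)
  · rfl

lemma truncChoose_zero_right (a : ℤ) : truncChoose a 0 = if 0 ≤ a then 1 else 0 := by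
  simp [truncChoose]

lemma truncChoose_succ_succ (a : ℤ) (r : ℕ) :
    truncChoose (a + 1) (r + 1) = truncChoose a r + truncChoose a (r + 1) := by
  rcases lt_or_ge a 0 with ha | ha
  · rw [truncChoose_of_lt (by push_cast; omega), truncChoose_of_lt (a := a) (r := r) (by omega),
      truncChoose_of_lt (a := a) (r := r + 1) (by push_cast; omega), add_zero]
  · lift a to ℕ using ha
    rw [← Nat.cast_succ, truncChoose_natCast, truncChoose_natCast, truncChoose_natCast,
      Nat.choose_succ_succ', Nat.cast_add]

lemma sum_range_truncChoose (y : ℤ) (r M : ℕ) :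
    ∑ t ∈ range (M + 1), truncChoose (y - t) r
      = truncChoose (y + 1) (r + 1) - truncChoose (y - M) (r + 1) := by
  induction M with
  | zero => simp [truncChoose_succ_succ]
  | succ M ih =>
    have pascal := truncChoose_succ_succ (y - (M + 1 : ℕ)) r
    rw [show y - ((M + 1 : ℕ) : ℤ) + 1 = y - M by push_cast; ring] at pascal
    rw [sum_range_succ, ih]
    linarith

lemma sum_range_alternating_choose_mul_sub (m : ℕ) (g : ℕ → ℤ) :
    ∑ j ∈ range (m + 1), (-1) ^ j * (m.choose j : ℤ) * (g j - g (j + 1))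
      = ∑ j ∈ range (m + 2), (-1) ^ j * ((m + 1).choose j : ℤ) * g j := by
  have shift := sum_range_succ' (fun j => (-1) ^ j * (m.choose j : ℤ) * g j) (m + 1)
  rw [sum_range_succ _ (m + 1), Nat.choose_succ_self] at shift
  rw [sum_range_succ' _ (m + 1)]
  simp only [Nat.choose_succ_succ', Nat.cast_add, mul_add, add_mul, sum_add_distrib, mul_sub,
    sum_sub_distrib, pow_succ, mul_neg_one, neg_mul, sum_neg_distrib, pow_zero,
    Nat.choose_zero_right, Nat.cast_zero, Nat.cast_one, mul_zero, zero_mul, add_zero, one_mul]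
    at shift ⊢
  linarith

noncomputable def tuplesWithSum (M k : ℕ) (S : ℤ) : Finset (Fin k → ℤ) :=
  {p ∈ Fintype.piFinset fun _ => Icc (0 : ℤ) M | ∑ i, p i = S}

lemma card_tuplesWithSum_zero (M : ℕ) (S : ℤ) :
    #(tuplesWithSum M 0 S) = if S = 0 then 1 else 0 := by
  split_ifs with hS <;> simp [tuplesWithSum, hS, eq_comm]

lemma card_tuplesWithSum_succ (M k : ℕ) (S : ℤ) :
    #(tuplesWithSum M (k + 1) S) = ∑ t ∈ range (M + 1), #(tuplesWithSum M k (S - t)) := by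
  have hmaps : ∀ p ∈ tuplesWithSum M (k + 1) S, (p 0).toNat ∈ range (M + 1) := by
    intro p hp
    simp only [tuplesWithSum, mem_filter, Fintype.mem_piFinset, mem_Icc] at hp
    have := hp.1 0
    simp only [mem_range]
    omega
  rw [card_eq_sum_card_fiberwise hmaps]
  refine sum_congr rfl fun t ht => card_nbij' Fin.tail (fun q => Fin.cons (t : ℤ) q) ?_ ?_ ?_ ?_
  · intro p hp
    simp only [tuplesWithSum, coe_filter, mem_filter, Fintype.mem_piFinset, mem_Icc,
      Set.mem_ofPred_eq, Fin.sum_univ_succ] at hp ⊢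
    obtain ⟨⟨hbox, hsum⟩, rfl⟩ := hp
    refine ⟨fun i => hbox i.succ, ?_⟩
    have := hbox 0
    simp only [Fin.tail]
    omega
  · intro q hq
    simp only [tuplesWithSum, coe_filter, mem_filter, Fintype.mem_piFinset, mem_Icc,
      Set.mem_ofPred_eq, Fin.sum_univ_succ, Fin.forall_fin_succ, Fin.cons_zero, Fin.cons_succ,
      mem_range, Int.toNat_natCast, and_true] at hq ht ⊢
    exact ⟨⟨by omega, hq.1⟩, by omega⟩
  · intro p hp
    simp only [tuplesWithSum, coe_filter, mem_filter, Fintype.mem_piFinset, mem_Icc,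
      Set.mem_ofPred_eq] at hp
    have := hp.1.1 0
    rw [← hp.2, Int.toNat_of_nonneg this.1]
    exact Fin.cons_self_tail p
  · intro q _
    exact Fin.tail_cons _ _

theorem card_tuplesWithSum (M k : ℕ) (S : ℤ) :
    (#(tuplesWithSum M (k + 1) S) : ℤ) = ∑ j ∈ range (k + 2),
      (-1) ^ j * ((k + 1).choose j : ℤ) * truncChoose (S - j * (M + 1) + k) k := by
  induction k generalizing S with
  | zero =>
    have indicator : ∀ t : ℕ, ((if S - t = 0 then 1 else 0 : ℕ) : ℤ)
        = truncChoose (S - t) 0 - truncChoose (S - (t + 1 : ℕ)) 0 := by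
      intro t
      simp only [truncChoose_zero_right]
      push_cast
      split_ifs <;> omega
    rw [card_tuplesWithSum_succ, Nat.cast_sum]
    simp only [card_tuplesWithSum_zero, indicator]
    rw [sum_range_sub']
    simp [sum_range_succ, sub_eq_add_neg]
  | succ k ih =>
    -- summing over one coordinate is the hockey-stick identity in each term,
    -- after which Pascal's rule in `j` merges the differences
    set g : ℕ → ℤ := fun j => truncChoose (S - j * (M + 1) + (k + 1)) (k + 1)
    have inner : ∀ j : ℕ,
        ∑ t ∈ range (M + 1), truncChoose (S - t - j * (M + 1) + k) k = g j - g (j + 1) := by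
      intro j
      have := sum_range_truncChoose (S - j * (M + 1) + k) k M
      simp only [g]
      push_cast
      convert this using 3 <;> ring
    calc (#(tuplesWithSum M (k + 2) S) : ℤ)
        = ∑ t ∈ range (M + 1), ∑ j ∈ range (k + 2),
            (-1) ^ j * ((k + 1).choose j : ℤ) * truncChoose (S - t - j * (M + 1) + k) k := by
          rw [card_tuplesWithSum_succ, Nat.cast_sum]
          exact sum_congr rfl fun t _ => ih (S - t)
      _ = ∑ j ∈ range (k + 2), (-1) ^ j * ((k + 1).choose j : ℤ) * (g j - g (j + 1)) := by
          rw [sum_comm]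
          exact sum_congr rfl fun j _ => by rw [← mul_sum, inner]
      _ = _ := by
          rw [sum_range_alternating_choose_mul_sub]
          push_cast
          rfl

noncomputable def zeroSumBox (k n : ℕ) : Finset (Fin k → ℤ) :=
  {p ∈ Fintype.piFinset fun _ => Icc (-n : ℤ) n | ∑ i, p i = 0}

lemma Akb_eq_card_zeroSumBox (k n : ℕ) : Akb k n = #(zeroSumBox (k + 1) n) := by
  rw [Akb, ← Nat.card_eq_finsetCard]
  exact Nat.card_congr (Equiv.subtypeEquivRight fun p => by simp [zeroSumBox, abs_le])

lemma Aks_eq_card_filter_zeroSumBox (k n : ℕ) :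
    Aks k n = #{p ∈ zeroSumBox (k + 1) n | ∃ i, |p i| = (n : ℤ)} := by
  rw [Aks, ← Nat.card_eq_finsetCard]
  exact Nat.card_congr (Equiv.subtypeEquivRight fun p => by simp [zeroSumBox, abs_le]; tauto)

lemma card_zeroSumBox_succ (k n : ℕ) :
    #(zeroSumBox k (n + 1)) = #{p ∈ zeroSumBox k (n + 1) | ∃ i, |p i| = ((n + 1 : ℕ) : ℤ)}
      + #(zeroSumBox k n) := by
  rw [← card_filter_add_card_filter_not (fun p => ∃ i, |p i| = ((n + 1 : ℕ) : ℤ))]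
  congr 2
  have inner_layer : ∀ x : ℤ, ((-((n + 1 : ℕ) : ℤ) ≤ x ∧ x ≤ (n + 1 : ℕ)) ∧ ¬|x| = (n + 1 : ℕ))
      ↔ -(n : ℤ) ≤ x ∧ x ≤ n := by
    intro x
    rw [abs_eq (by positivity)]
    push_cast
    omega
  ext p
  simp only [zeroSumBox, mem_filter, Fintype.mem_piFinset, mem_Icc, not_exists, ← inner_layer,
    forall_and]
  tauto

lemma card_zeroSumBox_eq_card_tuplesWithSum (k n : ℕ) :
    #(zeroSumBox k n) = #(tuplesWithSum (2 * n) k (k * n)) := by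
  refine card_nbij' (· + fun _ => (n : ℤ)) (· - fun _ => (n : ℤ)) ?_ ?_ ?_ ?_
  · intro p hp
    simp only [zeroSumBox, tuplesWithSum, coe_filter, Fintype.mem_piFinset, mem_Icc,
      Set.mem_ofPred_eq, Pi.add_apply, sum_add_distrib] at hp ⊢
    refine ⟨fun i => ?_, ?_⟩
    · have := hp.1 i
      push_cast
      omega
    · simp [hp.2]
  · intro p hp
    simp only [zeroSumBox, tuplesWithSum, coe_filter, Fintype.mem_piFinset, mem_Icc,
      Set.mem_ofPred_eq, Pi.sub_apply, sum_sub_distrib] at hp ⊢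
    refine ⟨fun i => ?_, ?_⟩
    · have := hp.1 i
      push_cast at this
      omega
    · simp [hp.2]
  · exact fun p _ => add_sub_cancel_right p _
  · exact fun p _ => sub_add_cancel p _

theorem Akb_eq_sum (k n : ℕ) : (Akb k n : ℤ) = ∑ j ∈ range (k + 2),
    (-1) ^ j * ((k + 1).choose j : ℤ) * truncChoose ((k + 1) * n - j * (2 * n + 1) + k) k := by
  rw [Akb_eq_card_zeroSumBox, card_zeroSumBox_eq_card_tuplesWithSum, card_tuplesWithSum]
  push_cast
  rfl

lemma Akb_succ (k n : ℕ) : Akb k (n + 1) = Aks k (n + 1) + Akb k n := by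
  rw [Akb_eq_card_zeroSumBox, Aks_eq_card_filter_zeroSumBox, Akb_eq_card_zeroSumBox,
    card_zeroSumBox_succ]

lemma Akb_five (n : ℕ) : (Akb 5 n : ℤ) =
    (6 * n + 5).choose 5 - 6 * (4 * n + 4).choose 5 + 15 * (2 * n + 3).choose 5 := by
  rw [Akb_eq_sum]
  simp only [sum_range_succ, sum_range_zero]
  norm_num
  have top0 : (6 * n + 5 : ℤ) = (6 * n + 5 : ℕ) := by push_cast; ring
  have top1 : (6 * n - (2 * n + 1) + 5 : ℤ) = (4 * n + 4 : ℕ) := by push_cast; ring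
  have top2 : (6 * n - 2 * (2 * n + 1) + 5 : ℤ) = (2 * n + 3 : ℕ) := by push_cast; ring
  rw [top0, top1, top2, truncChoose_of_lt (a := 6 * n - 3 * (2 * n + 1) + 5) (by omega),
    truncChoose_of_lt (a := 6 * n - 4 * (2 * n + 1) + 5) (by omega),
    truncChoose_of_lt (a := 6 * n - 5 * (2 * n + 1) + 5) (by omega),
    truncChoose_of_lt (a := 6 * n - 6 * (2 * n + 1) + 5) (by omega)]
  simp only [truncChoose_natCast, show Nat.choose 6 2 = 15 from rfl]
  ring

lemma cast_choose_five (b : ℕ) :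
    120 * (b.choose 5 : ℤ) = b * (b - 1) * (b - 2) * (b - 3) * (b - 4) := by
  have h := descPochhammer_eval_eq_descFactorial ℤ b 5
  rw [Nat.descFactorial_eq_factorial_mul_choose, show (5 : ℕ).factorial = 120 from rfl] at h
  simp only [descPochhammer_succ_eval, descPochhammer_zero, Polynomial.eval_one] at h
  push_cast at h
  linear_combination -h

theorem five_mul_Akb_five (n : ℕ) :
    5 * Akb 5 n = (2 * n + 1) * (5 + 27 * n + 71 * n ^ 2 + 88 * n ^ 3 + 44 * n ^ 4) := by
  have h0 := cast_choose_five (6 * n + 5)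
  have h1 := cast_choose_five (4 * n + 4)
  have h2 := cast_choose_five (2 * n + 3)
  zify
  push_cast at h0 h1 h2
  refine mul_left_cancel₀ (by norm_num : (24 : ℤ) ≠ 0) ?_
  linear_combination 120 * Akb_five n + h0 - 6 * h1 + 15 * h2

theorem A5_bulk_surface :
    (∀ n : ℕ, 5 * Akb 5 n = (2 * n + 1) * (5 + 27 * n + 71 * n ^ 2 + 88 * n ^ 3 + 44 * n ^ 4)) ∧
    (∀ n : ℕ, 1 ≤ n → Aks 5 n = 2 + 50 * n ^ 2 + 88 * n ^ 4) := by
  refine ⟨five_mul_Akb_five, fun n hn => ?_⟩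
  obtain ⟨m, rfl⟩ := Nat.exists_eq_add_of_le' hn
  have step := Akb_succ 5 m
  have bulk := five_mul_Akb_five m
  have bulk_succ := five_mul_Akb_five (m + 1)
  refine Nat.eq_of_mul_eq_mul_left (by norm_num : 0 < 5) ?_
  zify at step bulk bulk_succ ⊢
  linear_combination bulk_succ - bulk - 5 * step
end

section
/- For every integer n ≥ 0, the number of tuples (α₁, α₂, α₃, α₄, α₅, α₆, β) ∈ ℤ⁷ such that all eight integers −α₁+β, α₁−α₂+β, α₂−α₃+β, α₃−α₄+β, α₄−α₅−β, α₅−α₆−β, α₆−β, −β have absolute value at most n equals A_7^b(n), the number of vectors p ∈ ℤ⁸ with |p_i| ≤ n for all i and p_1+⋯+p_8 = 0. -/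
/-- `E7b n` : the number of integer-coordinate points of the `E₇` lattice whose
eight Cartesian coordinates all have absolute value at most `n`, parametrized by
tuples `(α₁, α₂, α₃, α₄, α₅, α₆, β) ∈ ℤ⁷`. -/
noncomputable def E7b (n : ℕ) : ℕ :=
  Nat.card {t : ℤ × ℤ × ℤ × ℤ × ℤ × ℤ × ℤ //
    |-t.1 + t.2.2.2.2.2.2| ≤ (n : ℤ) ∧
    |t.1 - t.2.1 + t.2.2.2.2.2.2| ≤ (n : ℤ) ∧
    |t.2.1 - t.2.2.1 + t.2.2.2.2.2.2| ≤ (n : ℤ) ∧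
    |t.2.2.1 - t.2.2.2.1 + t.2.2.2.2.2.2| ≤ (n : ℤ) ∧
    |t.2.2.2.1 - t.2.2.2.2.1 - t.2.2.2.2.2.2| ≤ (n : ℤ) ∧
    |t.2.2.2.2.1 - t.2.2.2.2.2.1 - t.2.2.2.2.2.2| ≤ (n : ℤ) ∧
    |t.2.2.2.2.2.1 - t.2.2.2.2.2.2| ≤ (n : ℤ) ∧
    |-t.2.2.2.2.2.2| ≤ (n : ℤ)}

/-!
The eight Cartesian coordinates of the point with parameters `(α₁, …, α₆, β)` always sum to
zero, and conversely every zero-sum `p ∈ ℤ⁸` arises from exactly one parameter tuple: the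
coordinates can be solved for the parameters from the last one upwards with integer
coefficients. So the parametrization is a bijection from `ℤ⁷` onto the zero-sum hyperplane of
`ℤ⁸`, and it carries the box condition of `E7b` to that of `Akb 7`.
-/

def e7Coords (t : ℤ × ℤ × ℤ × ℤ × ℤ × ℤ × ℤ) : Fin 8 → ℤ :=
  ![-t.1 + t.2.2.2.2.2.2,
    t.1 - t.2.1 + t.2.2.2.2.2.2,
    t.2.1 - t.2.2.1 + t.2.2.2.2.2.2,
    t.2.2.1 - t.2.2.2.1 + t.2.2.2.2.2.2,
    t.2.2.2.1 - t.2.2.2.2.1 - t.2.2.2.2.2.2,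
    t.2.2.2.2.1 - t.2.2.2.2.2.1 - t.2.2.2.2.2.2,
    t.2.2.2.2.2.1 - t.2.2.2.2.2.2,
    -t.2.2.2.2.2.2]

def e7Params (p : Fin 8 → ℤ) : ℤ × ℤ × ℤ × ℤ × ℤ × ℤ × ℤ :=
  (p 1 + p 2 + p 3 + p 4 + p 5 + p 6,
    p 2 + p 3 + p 4 + p 5 + p 6 - p 7,
    p 3 + p 4 + p 5 + p 6 - 2 * p 7,
    p 4 + p 5 + p 6 - 3 * p 7,
    p 5 + p 6 - 2 * p 7,
    p 6 - p 7,
    -p 7)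

theorem sum_e7Coords (t : ℤ × ℤ × ℤ × ℤ × ℤ × ℤ × ℤ) : ∑ i, e7Coords t i = 0 := by
  simp only [e7Coords, Fin.sum_univ_eight, Matrix.cons_val]
  ring

theorem e7Params_e7Coords (t : ℤ × ℤ × ℤ × ℤ × ℤ × ℤ × ℤ) : e7Params (e7Coords t) = t := by
  obtain ⟨a₁, a₂, a₃, a₄, a₅, a₆, b⟩ := t
  simp only [e7Params, e7Coords, Matrix.cons_val, Prod.mk.injEq]
  omega

theorem e7Coords_e7Params {p : Fin 8 → ℤ} (hp : ∑ i, p i = 0) : e7Coords (e7Params p) = p := by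
  rw [Fin.sum_univ_eight] at hp
  ext i
  fin_cases i <;>
    simp only [Fin.zero_eta, Fin.mk_one, Fin.reduceFinMk, e7Coords, e7Params, Matrix.cons_val] <;>
    omega

def e7Equiv : (ℤ × ℤ × ℤ × ℤ × ℤ × ℤ × ℤ) ≃ {p : Fin 8 → ℤ // ∑ i, p i = 0} where
  toFun t := ⟨e7Coords t, sum_e7Coords t⟩
  invFun p := e7Params p
  left_inv := e7Params_e7Coords
  right_inv p := Subtype.ext (e7Coords_e7Params p.2)

theorem forall_abs_e7Coords_le_iff (t : ℤ × ℤ × ℤ × ℤ × ℤ × ℤ × ℤ) (n : ℤ) :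
    (∀ i, |e7Coords t i| ≤ n) ↔
      |-t.1 + t.2.2.2.2.2.2| ≤ n ∧
      |t.1 - t.2.1 + t.2.2.2.2.2.2| ≤ n ∧
      |t.2.1 - t.2.2.1 + t.2.2.2.2.2.2| ≤ n ∧
      |t.2.2.1 - t.2.2.2.1 + t.2.2.2.2.2.2| ≤ n ∧
      |t.2.2.2.1 - t.2.2.2.2.1 - t.2.2.2.2.2.2| ≤ n ∧
      |t.2.2.2.2.1 - t.2.2.2.2.2.1 - t.2.2.2.2.2.2| ≤ n ∧
      |t.2.2.2.2.2.1 - t.2.2.2.2.2.2| ≤ n ∧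
      |-t.2.2.2.2.2.2| ≤ n := by
  simp only [Fin.forall_fin_succ, IsEmpty.forall_iff, and_true]
  rfl

theorem E7_bulk (n : ℕ) : E7b n = Akb 7 n := by
  unfold E7b Akb
  refine Nat.card_congr <|
    (e7Equiv.subtypeEquiv fun t => (forall_abs_e7Coords_le_iff t n).symm).trans <|
      (Equiv.subtypeSubtypeEquivSubtypeInter _ _).trans (Equiv.subtypeEquivRight fun _ => and_comm)
end
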